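/- arXiv:0909.0303 — 2 statements merged into one kernel-verified Lean document; each statement's English description precedes it below -/
import Mathlib

section
/- Let a₁ ≥ a₂ ≥ … ≥ a_r and b₁ ≥ b₂ ≥ … ≥ b_r be nonnegative reals with r ≥ 11, let μA = a₁ + … + a_r and μB = b₁ + … + b_r, and suppose μB < μA − 8·μA/r. Then it cannot be that both b_{r-4} ≥ a₃ and b_{r-4} ≥ a₁/3 hold. -/
theorem stmt3 (r : ℕ) (hr : 11 ≤ r) (a b : Fin r → ℝ)
    (ha0 : ∀ i, 0 ≤ a i) (hb0 : ∀ i, 0 ≤ b i)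
    (hasort : ∀ i j : Fin r, i ≤ j → a j ≤ a i)
    (hbsort : ∀ i j : Fin r, i ≤ j → b j ≤ b i)
    (h : ∑ i, b i < ∑ i, a i - 8 * (∑ i, a i) / r) :
    ¬ (a ⟨2, by omega⟩ ≤ b ⟨r - 5, by omega⟩ ∧
       a ⟨0, by omega⟩ / 3 ≤ b ⟨r - 5, by omega⟩) := by
  rintro ⟨h2, h0⟩
  set j : Fin r := ⟨r - 5, by omega⟩ with hj
  set c : ℝ := b j with hc0
  have hc : 0 ≤ c := hb0 j
  -- lower bound on sum b
  have hB : ((r : ℝ) - 4) * c ≤ ∑ i, b i := by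
    have h1 : ∀ i : Fin r, (if i ≤ j then c else 0) ≤ b i := by
      intro i
      split
      · exact hbsort i j (by assumption)
      · exact hb0 i
    have h2 : ∑ i, (if i ≤ j then c else 0) ≤ ∑ i, b i :=
      Finset.sum_le_sum fun i _ => h1 i
    have h3 : ∑ i, (if i ≤ j then c else 0) = ((r : ℝ) - 4) * c := by
      rw [← Finset.sum_filter]
      have : (Finset.univ.filter (fun i : Fin r => i ≤ j)) = Finset.Iic j := by
        ext i; simp
      rw [this, Finset.sum_const, Fin.card_Iic]
      have : (j : ℕ) + 1 = r - 4 := by simp [hj]; omega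
      rw [this, nsmul_eq_mul]
      have : ((r - 4 : ℕ) : ℝ) = (r : ℝ) - 4 := by
        push_cast [Nat.cast_sub (by omega : 4 ≤ r)]; ring
      rw [this]
    linarith
  -- upper bound on sum a
  have hA : ∑ i, a i ≤ ((r : ℝ) + 4) * c := by
    set j2 : Fin r := ⟨1, by omega⟩ with hj2
    have h1 : ∀ i : Fin r, a i ≤ c + (if i ≤ j2 then 2 * c else 0) := by
      intro i
      split_ifs with hi
      · have : a i ≤ a ⟨0, by omega⟩ := hasort ⟨0, by omega⟩ i (by simp [Fin.le_def])
        linarith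
      · have hi2 : (⟨2, by omega⟩ : Fin r) ≤ i := by
          simp only [Fin.le_def] at hi ⊢
          simp [hj2] at hi
          omega
        have : a i ≤ a ⟨2, by omega⟩ := hasort ⟨2, by omega⟩ i hi2
        linarith
    have h2 : ∑ i, a i ≤ ∑ i : Fin r, (c + (if i ≤ j2 then 2 * c else 0)) :=
      Finset.sum_le_sum fun i _ => h1 i
    have h3 : ∑ i : Fin r, (c + (if i ≤ j2 then 2 * c else 0)) = ((r : ℝ) + 4) * c := by
      rw [Finset.sum_add_distrib, Finset.sum_const, ← Finset.sum_filter]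
      have : (Finset.univ.filter (fun i : Fin r => i ≤ j2)) = Finset.Iic j2 := by
        ext i; simp
      rw [this, Finset.sum_const, Fin.card_Iic]
      simp [hj2]
      ring
    linarith
  have hr' : (11 : ℝ) ≤ (r : ℝ) := by exact_mod_cast hr
  have hrpos : (0 : ℝ) < r := by linarith
  have hmul : (∑ i, b i) * r < (∑ i, a i) * r - 8 * (∑ i, a i) := by
    have := mul_lt_mul_of_pos_right h hrpos
    rw [sub_mul, div_mul_cancel₀] at this
    · linarith
    · exact ne_of_gt hrpos
  nlinarith [mul_le_mul_of_nonneg_right hA (by linarith : (0:ℝ) ≤ (r:ℝ) - 8),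
    mul_le_mul_of_nonneg_right hB hrpos.le, mul_nonneg hc hrpos.le]
end

section
/- Generalized Step 7.2 dichotomy: let k ≥ 1, let a₁ ≥ … ≥ a_r and b₁ ≥ … ≥ b_r be nonnegative reals with r ≥ k² + 5k + 5, and suppose b₁ + … + b_r < (a₁ + … + a_r) − (k² + 4k + 3)(a₁ + … + a_r)/r. Then it cannot be that both b_{r-2k} ≥ a_{k+2} and b_{r-2k} ≥ a₁/(k+2). -/
theorem stmt14 (k r : ℕ) (hk : 1 ≤ k) (hr : k ^ 2 + 5 * k + 5 ≤ r)
    (a b : Fin r → ℝ)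
    (ha0 : ∀ i, 0 ≤ a i) (hb0 : ∀ i, 0 ≤ b i)
    (hasort : ∀ i j : Fin r, i ≤ j → a j ≤ a i)
    (hbsort : ∀ i j : Fin r, i ≤ j → b j ≤ b i)
    (h : ∑ i, b i < ∑ i, a i - (k ^ 2 + 4 * k + 3) * (∑ i, a i) / r) :
    ¬ (a ⟨k + 1, by nlinarith⟩ ≤ b ⟨r - 2 * k - 1, by omega⟩ ∧
       a ⟨0, by omega⟩ / (k + 2) ≤ b ⟨r - 2 * k - 1, by omega⟩) := by
  rintro ⟨h1, h2⟩
  set j : Fin r := ⟨r - 2 * k - 1, by omega⟩ with hj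
  set jk : Fin r := ⟨k, by omega⟩ with hjk
  set t : ℝ := b j with htdef
  have ht0 : 0 ≤ t := hb0 j
  -- a 0 ≤ (k+2) * t
  have ha0t : a ⟨0, by omega⟩ ≤ ((k : ℝ) + 2) * t := by
    have hk2 : (0:ℝ) < (k:ℝ) + 2 := by positivity
    rw [div_le_iff₀ hk2] at h2
    calc a ⟨0, by omega⟩ ≤ t * ((k:ℝ) + 2) := by linarith
      _ = ((k:ℝ) + 2) * t := by ring
  -- lower bound on ∑ b
  have hB : ((r : ℝ) - 2 * k) * t ≤ ∑ i, b i := by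
    have hsub : ∑ i ∈ Finset.Iic j, b i ≤ ∑ i, b i :=
      Finset.sum_le_sum_of_subset_of_nonneg (Finset.subset_univ _)
        (fun i _ _ => hb0 i)
    have hlow : (Finset.Iic j).card • t ≤ ∑ i ∈ Finset.Iic j, b i :=
      Finset.card_nsmul_le_sum _ _ _ (fun i hi => hbsort i j (Finset.mem_Iic.mp hi))
    have hcard : (Finset.Iic j).card = r - 2 * k := by
      rw [Fin.card_Iic]; simp [hj]; omega
    rw [hcard] at hlow
    have : ((r - 2 * k : ℕ) : ℝ) * t ≤ ∑ i ∈ Finset.Iic j, b i := by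
      rwa [nsmul_eq_mul] at hlow
    have hcast : ((r - 2 * k : ℕ) : ℝ) = (r : ℝ) - 2 * k := by
      push_cast [Nat.cast_sub (by omega : 2 * k ≤ r)]; ring
    linarith [hcast ▸ this]
  -- upper bound on ∑ a
  have hA : ∑ i, a i ≤ ((k:ℝ) + 1) * ((k:ℝ) + 2) * t + ((r:ℝ) - (k:ℝ) - 1) * t := by
    have hsplit : ∑ i, a i = ∑ i ∈ Finset.Iic jk, a i + ∑ i ∈ (Finset.Iic jk)ᶜ, a i :=
      (Finset.sum_add_sum_compl _ _).symm
    have hub1 : ∑ i ∈ Finset.Iic jk, a i ≤ (Finset.Iic jk).card • (((k:ℝ) + 2) * t) := by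
      apply Finset.sum_le_card_nsmul
      intro i hi
      calc a i ≤ a ⟨0, by omega⟩ := hasort ⟨0, by omega⟩ i (by simp [Fin.le_def])
        _ ≤ ((k:ℝ) + 2) * t := ha0t
    have hub2 : ∑ i ∈ (Finset.Iic jk)ᶜ, a i ≤ ((Finset.Iic jk)ᶜ).card • t := by
      apply Finset.sum_le_card_nsmul
      intro i hi
      have hi' : jk < i := by simpa using (Finset.mem_compl.mp hi)
      have : a i ≤ a ⟨k + 1, by nlinarith⟩ := by
        apply hasort
        rw [Fin.le_def]
        simp [hjk, Fin.lt_def] at hi' ⊢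
        omega
      linarith
    have hc1 : (Finset.Iic jk).card = k + 1 := by rw [Fin.card_Iic]
    have hc2 : ((Finset.Iic jk)ᶜ).card = r - (k + 1) := by
      rw [Finset.card_compl, hc1, Fintype.card_fin]
    rw [hc1] at hub1; rw [hc2] at hub2
    rw [nsmul_eq_mul] at hub1 hub2
    have hcast2 : ((r - (k+1) : ℕ) : ℝ) = (r : ℝ) - (k:ℝ) - 1 := by
      push_cast [Nat.cast_sub (by omega : k + 1 ≤ r)]; ring
    rw [hcast2] at hub2
    push_cast at hub1
    rw [hsplit]
    nlinarith
  -- final contradiction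
  have hR : (11 : ℝ) ≤ (r : ℝ) := by
    have : (11:ℕ) ≤ r := by nlinarith
    exact_mod_cast this
  have hK : (1 : ℝ) ≤ (k : ℝ) := by exact_mod_cast hk
  have hrk : (k:ℝ)^2 + 5*(k:ℝ) + 5 ≤ (r:ℝ) := by exact_mod_cast hr
  have hApos : 0 ≤ ∑ i, a i := Finset.sum_nonneg (fun i _ => ha0 i)
  have hRpos : (0:ℝ) < r := by linarith
  have h' := mul_lt_mul_of_pos_right h hRpos
  rw [sub_mul, div_mul_cancel₀ _ (ne_of_gt hRpos)] at h'
  nlinarith [mul_nonneg ht0 (sub_nonneg.mpr hR), sq_nonneg ((k:ℝ)+1),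
    mul_le_mul_of_nonneg_right hA (sub_nonneg.mpr (by nlinarith : (k:ℝ)^2+4*(k:ℝ)+3 ≤ (r:ℝ))),
    mul_le_mul_of_nonneg_right hB (le_of_lt hRpos), mul_pos hRpos hRpos,
    mul_nonneg (mul_nonneg ht0 (Nat.cast_nonneg k)) (Nat.cast_nonneg k), mul_nonneg ht0 (Nat.cast_nonneg k)]
end
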